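/- Let X be a small category, F a field, and R ∈ rep(X, Vect_F). Then R lies in the essential image of free_* : rep(X, Set_*) → rep(X, Vect_F) if and only if R has a multiplicative basis, i.e., a choice of basis B(x) of R(x) for every object x such that for every morphism f : x → y and every b ∈ B(x), the vector R(f)(b) is either an element of B(y) or zero. -/

import Mathlib

open CategoryTheory CategoryTheory.Limits

/-- The reduced free vector space functor `free_* : Set_* ⥤ Vect_F`. -/
noncomputable def freeStar (F : Type) [Field F] : Pointed.{0} ⥤ ModuleCat.{0} F where
  obj S := ModuleCat.of F ((S.X →₀ F) ⧸ Submodule.span F {Finsupp.single S.point (1 : F)})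
  map {S T} f := ModuleCat.ofHom (Submodule.mapQ _ _ (Finsupp.lmapDomain F F f.toFun)
    (by
      rw [Submodule.span_le, Set.singleton_subset_iff, SetLike.mem_coe, Submodule.mem_comap]
      simp only [Finsupp.lmapDomain_apply, Finsupp.mapDomain_single, f.map_point]
      exact Submodule.mem_span_singleton_self _))
  map_id S := by
    refine ModuleCat.hom_ext (Submodule.linearMap_qext _ ?_)
    ext x
    dsimp
    erw [Submodule.mapQ_apply]
    simp only [Finsupp.lmapDomain_apply, Finsupp.mapDomain_id]
  map_comp {S T U} f g := by
    refine ModuleCat.hom_ext (Submodule.linearMap_qext _ ?_)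
    ext x
    dsimp
    erw [Submodule.mapQ_apply]
    simp only [Finsupp.lmapDomain_apply, Finsupp.mapDomain_single, Function.comp_apply]

/-!
For a pointed set `S`, the classes of `a ≠ S.point` form a basis of `free_* S`, and
`free_*` of a pointed map sends such a basis vector to a basis vector or to the class of the
point, which is `0`; transporting these bases along an isomorphism gives a multiplicative basis.
Conversely, a multiplicative basis `B` makes `x ↦ B x ∪ {0}`, pointed at `0`, a subfunctor of `R`
with values in pointed sets, and the inclusions induce `free_* (B x ∪ {0}) ≅ R x` because they
send the basis of classes of the `b ∈ B x` onto the basis `B x` of `R x`.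
-/

namespace freeStar

variable (F : Type) [Field F]

noncomputable def of (S : Pointed.{0}) (a : S.X) : (freeStar F).obj S :=
  Submodule.Quotient.mk (Finsupp.single a (1 : F))

variable {F}

theorem of_point (S : Pointed.{0}) : of F S S.point = 0 :=
  (Submodule.Quotient.mk_eq_zero _).2 (Submodule.mem_span_singleton_self _)

theorem map_of {S T : Pointed.{0}} (f : S ⟶ T) (a : S.X) :
    (freeStar F).map f (of F S a) = of F T (f.toFun a) := by
  simp only [freeStar, of, ModuleCat.hom_ofHom]
  erw [Submodule.mapQ_apply]
  simp

variable {M : Type} [AddCommGroup M] [Module F M]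

theorem hom_ext {S : Pointed.{0}} {φ ψ : (freeStar F).obj S →ₗ[F] M}
    (h : ∀ a, φ (of F S a) = ψ (of F S a)) : φ = ψ :=
  Submodule.linearMap_qext _ (Finsupp.lhom_ext' fun a => LinearMap.ext_ring (h a))

variable (F) in
noncomputable def lift (S : Pointed.{0}) (v : S.X → M) (hv : v S.point = 0) :
    (freeStar F).obj S →ₗ[F] M :=
  Submodule.liftQ _ (Finsupp.linearCombination F v) (by
    rw [Submodule.span_le, Set.singleton_subset_iff, SetLike.mem_coe, LinearMap.mem_ker,
      Finsupp.linearCombination_single, hv, smul_zero])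

@[simp]
theorem lift_of (S : Pointed.{0}) (v : S.X → M) (hv : v S.point = 0) (a : S.X) :
    lift F S v hv (of F S a) = v a := by
  erw [lift, Submodule.liftQ_apply, Finsupp.linearCombination_single, one_smul]

open Classical in
noncomputable def equivFinsupp (S : Pointed.{0}) :
    (freeStar F).obj S ≃ₗ[F] ({a : S.X // a ≠ S.point} →₀ F) :=
  LinearEquiv.ofLinearMap
    (lift F S (fun a => if h : a = S.point then 0 else Finsupp.single ⟨a, h⟩ 1) (dif_pos rfl))
    (Finsupp.linearCombination F fun a => of F S a.1)
    (Finsupp.lhom_ext fun a c => by simp [a.2])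
    (hom_ext fun a => by
      by_cases h : a = S.point
      · subst h; simp [of_point]
      · simp [h])

variable (F) in
noncomputable def basis (S : Pointed.{0}) :
    Module.Basis {a : S.X // a ≠ S.point} F ((freeStar F).obj S) :=
  Finsupp.basisSingleOne.map (equivFinsupp S).symm

@[simp]
theorem basis_apply (S : Pointed.{0}) (a : {a : S.X // a ≠ S.point}) :
    basis F S a = of F S a.1 := by
  simp [basis, equivFinsupp]

theorem lift_bijective (S : Pointed.{0}) (v : S.X → M) (hv : v S.point = 0)
    (hli : LinearIndependent F fun a : {a : S.X // a ≠ S.point} => v a)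
    (hsp : Submodule.span F (Set.range fun a : {a : S.X // a ≠ S.point} => v a) = ⊤) :
    Function.Bijective (lift F S v hv) := by
  have : lift F S v hv = ((basis F S).equiv (.mk hli hsp.ge) (Equiv.refl _)).toLinearMap :=
    (basis F S).ext fun a => by
      rw [LinearEquiv.coe_coe, Module.Basis.equiv_apply, Module.Basis.mk_apply, basis_apply,
        lift_of, Equiv.refl_apply]
  rw [this]
  exact LinearEquiv.bijective _

end freeStar

variable {X : Type} [SmallCategory X] {F : Type} [Field F]

def IsMultiplicativeBasis (R : X ⥤ ModuleCat.{0} F) (B : ∀ x : X, Set (R.obj x)) : Prop :=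
  (∀ x : X, LinearIndependent F ((↑) : B x → R.obj x) ∧ Submodule.span F (B x) = ⊤) ∧
    ∀ (x y : X) (f : x ⟶ y), ∀ b ∈ B x, R.map f b ∈ B y ∨ R.map f b = 0

theorem isMultiplicativeBasis_freeStar (Z : X ⥤ Pointed.{0}) :
    IsMultiplicativeBasis (Z ⋙ freeStar F) fun x => Set.range (freeStar.basis F (Z.obj x)) := by
  refine ⟨fun x => ⟨?_, (freeStar.basis F _).span_eq⟩, ?_⟩
  · exact (linearIndepOn_id_range_iff (freeStar.basis F _).injective).2
      (freeStar.basis F _).linearIndependent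
  · rintro x y f _ ⟨a, rfl⟩
    rw [freeStar.basis_apply, Functor.comp_map, freeStar.map_of]
    by_cases h : (Z.map f).toFun a = (Z.obj y).point
    · exact .inr (h ▸ freeStar.of_point _)
    · exact .inl ⟨⟨_, h⟩, freeStar.basis_apply _ _⟩

theorem IsMultiplicativeBasis.map_iso {R R' : X ⥤ ModuleCat.{0} F} {B : ∀ x : X, Set (R.obj x)}
    (hB : IsMultiplicativeBasis R B) (e : R ≅ R') :
    IsMultiplicativeBasis R' fun x => e.hom.app x '' B x := by
  refine ⟨fun x => ⟨?_, ?_⟩, ?_⟩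
  · exact LinearIndepOn.id_imageₛ (hB.1 x).1 (e.app x).toLinearEquiv.injective.injOn
  · rw [Submodule.span_image, (hB.1 x).2, Submodule.map_top]
    exact LinearMap.range_eq_top.2 (e.app x).toLinearEquiv.surjective
  · rintro x y f _ ⟨b, hb, rfl⟩
    rw [← NatTrans.naturality_apply]
    rcases hB.2 x y f b hb with h | h
    · exact .inl ⟨_, h, rfl⟩
    · exact .inr (by rw [h, map_zero])

theorem IsMultiplicativeBasis.zero_notMem {R : X ⥤ ModuleCat.{0} F} {B : ∀ x : X, Set (R.obj x)}
    (hB : IsMultiplicativeBasis R B) (x : X) : (0 : R.obj x) ∉ B x :=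
  fun h => (hB.1 x).1.ne_zero ⟨0, h⟩ rfl

def pointedSubfunctor (R : X ⥤ ModuleCat.{0} F) (S : ∀ x : X, Set (R.obj x))
    (h0 : ∀ x, (0 : R.obj x) ∈ S x) (hS : ∀ (x y : X) (f : x ⟶ y), ∀ s ∈ S x, R.map f s ∈ S y) :
    X ⥤ Pointed.{0} where
  obj x := ⟨S x, ⟨0, h0 x⟩⟩
  map {x y} f := ⟨fun s => ⟨R.map f s, hS x y f s s.2⟩, Subtype.ext (map_zero _)⟩
  map_id x := Pointed.Hom.ext (funext fun s => Subtype.ext (by simp))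
  map_comp f g := Pointed.Hom.ext (funext fun s => Subtype.ext (by simp))

namespace IsMultiplicativeBasis

variable {R : X ⥤ ModuleCat.{0} F} {B : ∀ x : X, Set (R.obj x)}

def pointed (hB : IsMultiplicativeBasis R B) : X ⥤ Pointed.{0} :=
  pointedSubfunctor R (fun x => insert 0 (B x)) (fun x => Set.mem_insert _ _) fun x y f s hs => by
    rcases hs with rfl | hs
    · exact .inl (map_zero _)
    · exact (hB.2 x y f s hs).symm

theorem lift_pointed_bijective (hB : IsMultiplicativeBasis R B) (x : X) :
    Function.Bijective (freeStar.lift F (hB.pointed.obj x) Subtype.val rfl) := by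
  let P := {a : (hB.pointed.obj x).X // a ≠ (hB.pointed.obj x).point}
  have hmem (a : P) : a.1.1 ∈ B x :=
    (Set.mem_insert_iff.1 a.1.2).resolve_left fun h => a.2 (Subtype.ext h)
  have hli : LinearIndependent F fun a : P => a.1.1 :=
    (hB.1 x).1.comp (fun a : P => (⟨a.1.1, hmem a⟩ : B x)) fun _ _ h =>
      Subtype.ext (Subtype.ext (congrArg Subtype.val h :))
  have hsp : B x ⊆ Set.range fun a : P => a.1.1 := fun b hb =>
    ⟨⟨⟨b, Set.mem_insert_of_mem _ hb⟩, fun h =>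
      hB.zero_notMem x ((show b = 0 from congrArg Subtype.val h) ▸ hb)⟩,
      rfl⟩
  exact freeStar.lift_bijective _ _ _ hli
    (eq_top_iff.2 ((hB.1 x).2.ge.trans (Submodule.span_mono hsp)))

noncomputable def freeStarIso (hB : IsMultiplicativeBasis R B) : hB.pointed ⋙ freeStar F ≅ R :=
  NatIso.ofComponents
    (fun x => (LinearEquiv.ofBijective _ (hB.lift_pointed_bijective x)).toModuleIso)
    fun f => ModuleCat.hom_ext (freeStar.hom_ext fun a => by
      simp only [ModuleCat.hom_comp, LinearMap.comp_apply, Functor.comp_map]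
      rw [freeStar.map_of]
      simp only [LinearEquiv.toModuleIso_hom, ModuleCat.hom_ofHom, LinearEquiv.coe_coe,
        LinearEquiv.ofBijective_apply]
      erw [freeStar.lift_of, freeStar.lift_of]
      rfl)

end IsMultiplicativeBasis

/-- A representation `R : X ⥤ Vect_F` lies in the essential image of
`free_* : rep(X, Set_*) ⥤ rep(X, Vect_F)` iff it has a multiplicative basis: a system of bases
such that every structure map sends every basis vector to a basis vector or to zero. -/
theorem stmt5 (X : Type) [SmallCategory X] (F : Type) [Field F]
    (R : X ⥤ ModuleCat.{0} F) :
    ((Functor.whiskeringRight X Pointed.{0} (ModuleCat.{0} F)).obj (freeStar F)).essImage R ↔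
      ∃ B : ∀ x : X, Set (R.obj x),
        (∀ x : X, LinearIndependent F ((↑) : B x → R.obj x) ∧
          Submodule.span F (B x) = ⊤) ∧
        (∀ (x y : X) (f : x ⟶ y), ∀ b ∈ B x, R.map f b ∈ B y ∨ R.map f b = 0) := by
  change _ ↔ ∃ B, IsMultiplicativeBasis R B
  constructor
  · rintro ⟨Z, ⟨e⟩⟩
    exact ⟨_, (isMultiplicativeBasis_freeStar Z).map_iso e⟩
  · rintro ⟨B, hB⟩
    exact ⟨hB.pointed, ⟨hB.freeStarIso⟩⟩
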